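/- Let p be an odd prime, n ≥ 1, and x₁, …, x_p ∈ 𝔽_p^n. Define F_p(x₁,…,x_p) = Π_{i=1}^{n} (1 − (x_{1i} + x_{2i} + ⋯ + x_{pi})^{p−1}) ∈ 𝔽_p, where x_{ji} is the i-th coordinate of x_j, and define R_p(x₁,…,x_p) ∈ 𝔽_p as the image in 𝔽_p of Σ sgn(σ)·[the tuple is fixed by σ], summed over all permutations σ ∈ S_p with at least 3 orbits on Fin p. Let I_p = R_p · F_p. Then I_p(x₁,…,x_p) = 1 if x₁, …, x_p are pairwise distinct and x₁ + ⋯ + x_p = 0; I_p(x₁,…,x_p) = 1 if x₁ = ⋯ = x_p; and I_p(x₁,…,x_p) = 0 in all other cases. -/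

import Mathlib

/-- The number of cycles of a permutation of `Fin p`, counting fixed points as cycles
(i.e. the number of orbits of `σ` on `Fin p`). -/
def orbitCount {p : ℕ} (σ : Equiv.Perm (Fin p)) : ℕ :=
  (Finset.univ.filter fun i => σ i = i).card + Multiset.card σ.cycleType

/-- `F_p(x₁,…,x_p) = ∏_{i=1}^n (1 - (x_{1i} + ⋯ + x_{pi})^{p-1})` in `𝔽_p`. -/
def Fp (p n : ℕ) (x : Fin p → (Fin n → ZMod p)) : ZMod p :=
  ∏ i : Fin n, (1 - (∑ j : Fin p, x j i) ^ (p - 1))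

/-- `R_p(x₁,…,x_p)`: the image in `𝔽_p` of `∑ sgn(σ)·[x ∘ σ = x]`, summed over the
permutations `σ ∈ S_p` with at least 3 orbits on `Fin p`. -/
def Rp (p n : ℕ) (x : Fin p → (Fin n → ZMod p)) : ZMod p :=
  ((∑ σ ∈ Finset.univ.filter (fun σ : Equiv.Perm (Fin p) => 3 ≤ orbitCount σ),
    (Equiv.Perm.sign σ : ℤ) * (if ∀ i, x (σ i) = x i then 1 else 0) : ℤ) : ZMod p)

/-- `I_p = R_p · F_p`. -/
def Ip (p n : ℕ) (x : Fin p → (Fin n → ZMod p)) : ZMod p :=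
  Rp p n x * Fp p n x

/-!
By Fermat, `F_p` is the indicator of `∑ xⱼ = 0`. If the `xⱼ` are distinct, only the identity
fixes the tuple, so `R_p = 1`. If they are all equal, `R_p` is the signed count of permutations
with at least three cycles. Conjugation by a `p`-cycle `c` has order `p` and preserves sign and
cycle count, so modulo `p` only its fixed points contribute: these are the powers of `c`, and only
`1` among them has at least three cycles. In the remaining case with `∑ xⱼ = 0` the tuple takes at
least three values (two values `a ≠ b` taken `k` and `p - k` times give `k • (a - b) = 0`), so
every permutation fixing it has at least three cycles; as its stabiliser contains a
transposition, the signed sum vanishes.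
-/

open Finset Equiv Equiv.Perm

lemma apply_pow_apply_eq_of_invariant {α β : Type*} {σ : Perm α} {x : α → β}
    (hx : ∀ i, x (σ i) = x i) (k : ℕ) (i : α) : x ((σ ^ k) i) = x i := by
  induction k with
  | zero => rfl
  | succ k ih => rw [pow_succ', mul_apply, hx, ih]

section OrbitCount

variable {p : ℕ}

lemma orbitCount_eq_cycleType (σ : Perm (Fin p)) :
    orbitCount σ = p - σ.cycleType.sum + Multiset.card σ.cycleType := by
  have hfix : #(univ.filter fun i => σ i = i) = p - #σ.support := by
    have := card_filter_add_card_filter_not (s := univ) fun i => σ i = i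
    rw [card_univ, Fintype.card_fin] at this
    simp only [support, ne_eq]
    omega
  rw [orbitCount, hfix, sum_cycleType]

lemma orbitCount_one : orbitCount (1 : Perm (Fin p)) = p := by
  simp [orbitCount_eq_cycleType]

lemma orbitCount_conj (σ τ : Perm (Fin p)) : orbitCount (τ * σ * τ⁻¹) = orbitCount σ := by
  simp only [orbitCount_eq_cycleType, cycleType_conj]

lemma orbitCount_eq_one_of_orderOf_eq (hp : p.Prime) {σ : Perm (Fin p)} (hσ : orderOf σ = p) :
    orbitCount σ = 1 := by
  obtain ⟨k, hk⟩ := cycleType_prime_order (hσ ▸ hp)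
  have hle := sum_cycleType_le σ
  rw [hk, hσ, Multiset.sum_replicate, smul_eq_mul, Fintype.card_fin] at hle
  have hk0 : k = 0 := by nlinarith [hp.two_le]
  rw [orbitCount_eq_cycleType, hk, hσ, hk0]
  simp

lemma card_image_le_orbitCount {β : Type*} [DecidableEq β] {σ : Perm (Fin p)} {x : Fin p → β}
    (hx : ∀ i, x (σ i) = x i) : #(univ.image x) ≤ orbitCount σ := by
  have hcycle : ∀ c ∈ σ.cycleFactorsFinset, #(c.support.image x) ≤ 1 := by
    intro c hc
    refine card_le_one.mpr fun _ ha _ hb => ?_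
    obtain ⟨i, hi, rfl⟩ := mem_image.mp ha
    obtain ⟨j, hj, rfl⟩ := mem_image.mp hb
    rw [cycle_is_cycleOf hi hc, mem_support_cycleOf_iff] at hj
    obtain ⟨k, -, rfl⟩ := hj.1.exists_pow_eq'
    exact (apply_pow_apply_eq_of_invariant hx k i).symm
  have hcover : univ.image x ⊆ (univ.filter fun i => σ i = i).image x ∪
      σ.cycleFactorsFinset.biUnion fun c => c.support.image x := by
    intro v hv
    obtain ⟨i, -, rfl⟩ := mem_image.mp hv
    by_cases hi : σ i = i
    · exact mem_union_left _ (mem_image_of_mem x (by simpa using hi))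
    · have hsupp : i ∈ σ.support := mem_support.mpr hi
      refine mem_union_right _ (mem_biUnion.mpr ⟨σ.cycleOf i, ?_, mem_image_of_mem x ?_⟩)
      · exact cycleOf_mem_cycleFactorsFinset_iff.mpr hsupp
      · exact mem_support_cycleOf_iff.mpr ⟨SameCycle.refl _ _, hsupp⟩
  calc #(univ.image x)
      ≤ #((univ.filter fun i => σ i = i).image x) +
          #(σ.cycleFactorsFinset.biUnion fun c => c.support.image x) :=
        (card_le_card hcover).trans (card_union_le _ _)
    _ ≤ #(univ.filter fun i => σ i = i) + ∑ c ∈ σ.cycleFactorsFinset, 1 :=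
        add_le_add card_image_le (card_biUnion_le.trans (sum_le_sum hcycle))
    _ = orbitCount σ := by simp [orbitCount, cycleType_def]

end OrbitCount

section FixedPoints

variable {α : Type*} [DecidableEq α] {p : ℕ} [Fact p.Prime]

lemma card_modEq_card_filter_fixed {e : Perm α} (he : e ^ p = 1) (s : Finset α)
    (hs : ∀ a, e a ∈ s ↔ a ∈ s) : #s ≡ #(s.filter fun a => e a = a) [MOD p] := by
  have hrestr : e.subtypePerm hs ^ p ^ 1 = 1 := by
    ext ⟨a, _⟩
    simp [he]
  have hfixed : #(e.subtypePerm hs).supportᶜ = #(s.filter fun a => e a = a) := by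
    refine card_bij (fun a _ => a.1) ?_ (fun a _ b _ => Subtype.ext) ?_
    · intro a ha
      simpa [Subtype.ext_iff] using ha
    · intro a ha
      obtain ⟨has, hfix⟩ := mem_filter.mp ha
      exact ⟨⟨a, has⟩, by simpa [Subtype.ext_iff] using hfix, rfl⟩
  have h := card_compl_support_modEq hrestr
  rw [hfixed, Fintype.card_coe] at h
  exact h.symm

lemma sum_eq_sum_filter_fixed {e : Perm α} (he : e ^ p = 1) (s : Finset α)
    (hs : ∀ a, e a ∈ s ↔ a ∈ s) (f : α → ZMod p) (hf : ∀ a, f (e a) = f a) :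
    ∑ a ∈ s, f a = ∑ a ∈ s with e a = a, f a := by
  -- each fibre of `f` is `e`-invariant, so its size only matters modulo `p`
  have hfiber :
      ∀ t : Finset α, ∑ a ∈ t, f a = ∑ b : ZMod p, #(t.filter fun a => f a = b) • b := by
    intro t
    rw [← sum_fiberwise t f f]
    refine sum_congr rfl fun b _ => ?_
    rw [sum_congr rfl fun a ha => (mem_filter.mp ha).2, sum_const]
  rw [hfiber, hfiber]
  refine sum_congr rfl fun b _ => ?_
  rw [filter_comm, nsmul_eq_mul, nsmul_eq_mul]
  congr 1
  exact (ZMod.natCast_eq_natCast_iff _ _ _).mpr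
    (card_modEq_card_filter_fixed he _ fun a => by simp [hs, hf])

end FixedPoints

section Signs

variable {p : ℕ}

lemma sum_sign_eq_zero_of_mul_swap_mem {α : Type*} [DecidableEq α] [Fintype α]
    {s : Finset (Perm α)} {a b : α} (hab : a ≠ b) (hs : ∀ σ ∈ s, σ * swap a b ∈ s) :
    ∑ σ ∈ s, (sign σ : ℤ) = 0 := by
  refine sum_involution (fun σ _ => σ * swap a b) (fun σ _ => ?_) (fun σ _ _ h => ?_) hs
    (fun σ _ => by rw [mul_assoc, swap_mul_self, mul_one])
  · rw [Perm.sign_mul, sign_swap hab]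
    simp
  · exact hab (swap_eq_one_iff.mp (mul_eq_left.mp h))

lemma orderOf_finRotate (hp : 2 ≤ p) : orderOf (finRotate p) = p := by
  rw [(isCycle_finRotate_of_le hp).orderOf, support_finRotate_of_le hp, card_univ,
    Fintype.card_fin]

lemma eq_one_of_commute_finRotate (hp : p.Prime) {σ : Perm (Fin p)}
    (hσ : Commute σ (finRotate p)) (h : orbitCount σ ≠ 1) : σ = 1 := by
  have hc : (finRotate p).IsCycle := isCycle_finRotate_of_le hp.two_le
  have hsupp : (finRotate p).support = univ := support_finRotate_of_le hp.two_le
  obtain ⟨_, hmem⟩ := hc.commute_iff.mp hσ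
  rw [ofSubtype_subtypePerm _ (fun i _ => hsupp ▸ mem_univ i)] at hmem
  by_contra hne
  have horder : orderOf σ = p := by
    have hdvd := orderOf_dvd_of_mem_zpowers hmem
    rw [orderOf_finRotate hp.two_le] at hdvd
    exact (hp.eq_one_or_self_of_dvd _ hdvd).resolve_left (by simpa using hne)
  exact h (orbitCount_eq_one_of_orderOf_eq hp horder)

lemma sum_sign_filter_three_le_orbitCount (hp : p.Prime) (hp3 : 3 ≤ p) :
    ∑ σ : Perm (Fin p) with 3 ≤ orbitCount σ, (sign σ : ZMod p) = 1 := by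
  have := Fact.mk hp
  set c := finRotate p
  let e : Perm (Perm (Fin p)) := MulAut.toPerm _ (MulAut.conj c)
  have he : ∀ σ, e σ = c * σ * c⁻¹ := fun σ => rfl
  have hep : e ^ p = 1 := by
    have hcp := pow_orderOf_eq_one c
    rw [orderOf_finRotate hp.two_le] at hcp
    rw [← map_pow, ← map_pow, hcp, map_one, map_one]
  have hsign : ∀ σ, (sign (e σ) : ZMod p) = sign σ := fun σ => by
    rw [he, Perm.sign_mul, Perm.sign_mul, Perm.sign_inv, mul_right_comm, Int.units_mul_self,
      one_mul]
  have hfixed : (univ.filter fun σ => 3 ≤ orbitCount σ).filter (fun σ => e σ = σ) = {1} := by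
    ext σ
    simp only [mem_filter, mem_univ, true_and, mem_singleton, he, mul_inv_eq_iff_eq_mul]
    constructor
    · rintro ⟨h3, hcomm⟩
      exact eq_one_of_commute_finRotate hp (Commute.symm hcomm) (by omega)
    · rintro rfl
      simp [orbitCount_one, hp3]
  have hinv : ∀ σ, e σ ∈ univ.filter (fun σ => 3 ≤ orbitCount σ) ↔
      σ ∈ univ.filter (fun σ => 3 ≤ orbitCount σ) := fun σ => by
    simp only [mem_filter, mem_univ, true_and, he, orbitCount_conj]
  rw [sum_eq_sum_filter_fixed hep _ hinv _ hsign, hfixed, sum_singleton, Perm.sign_one,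
    Units.val_one, Int.cast_one]

end Signs

section ZModModule

variable {p : ℕ} [Fact p.Prime] {V : Type*} [AddCommGroup V] [Module (ZMod p) V]

lemma forall_eq_of_sum_eq_zero_of_two_values {x : Fin p → V} (hsum : ∑ j, x j = 0) {a b : V}
    (hx : ∀ j, x j = a ∨ x j = b) (i j : Fin p) : x i = x j := by
  classical
  set s := univ.filter fun j => x j = a
  have hdiff : ∀ j, x j - b = if x j = a then a - b else 0 := fun j => by
    rcases hx j with h | h <;> by_cases hab : a = b <;> simp [h, hab, Ne.symm]
  have hcount : (#s : ZMod p) • (a - b) = 0 := by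
    calc (#s : ZMod p) • (a - b) = ∑ j, (x j - b) := by
          simp only [hdiff, sum_ite, sum_const, smul_zero, add_zero, Nat.cast_smul_eq_nsmul, s]
      _ = ∑ j, x j - (p : ZMod p) • b := by
          rw [sum_sub_distrib, sum_const, card_univ, Fintype.card_fin, Nat.cast_smul_eq_nsmul]
      _ = 0 := by rw [hsum, ZMod.natCast_self, zero_smul, sub_zero]
  have hs : #s ≤ p := (card_le_univ s).trans_eq (Fintype.card_fin p)
  rcases smul_eq_zero.mp hcount with hdvd | hab
  · rw [ZMod.natCast_eq_zero_iff] at hdvd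
    rcases hs.eq_or_lt with hall | hlt
    · have hxa : ∀ k, x k = a := fun k => by
        have hk : k ∈ s := eq_univ_of_card s (hall.trans (Fintype.card_fin p).symm) ▸ mem_univ k
        exact (mem_filter.mp hk).2
      rw [hxa, hxa]
    · have hxb : ∀ k, x k = b := fun k => by
        have hk : k ∉ s := by simp [card_eq_zero.mp (Nat.eq_zero_of_dvd_of_lt hdvd hlt)]
        exact (hx k).resolve_left fun h => hk (mem_filter.mpr ⟨mem_univ k, h⟩)
      rw [hxb, hxb]
  · have hab : a = b := sub_eq_zero.mp hab
    rcases hx i with hi | hi <;> rcases hx j with hj | hj <;> simp [hi, hj, hab]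

lemma three_le_card_image_of_sum_eq_zero [DecidableEq V] {x : Fin p → V} (hsum : ∑ j, x j = 0)
    (hx : ¬∀ i j, x i = x j) : 3 ≤ #(univ.image x) := by
  obtain ⟨i, j, hij⟩ : ∃ i j, x i ≠ x j := by simpa using hx
  by_contra! hlt
  have hpair : univ.image x = {x i, x j} :=
    (eq_of_subset_of_card_le (by simp [insert_subset_iff])
      (by rw [card_pair hij]; omega)).symm
  refine hij (forall_eq_of_sum_eq_zero_of_two_values hsum (a := x i) (b := x j) (fun k => ?_)
    i j)
  simpa [hpair] using mem_image_of_mem x (mem_univ k)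

lemma sum_eq_zero_of_forall_eq {x : Fin p → V} (hx : ∀ i j, x i = x j) : ∑ j, x j = 0 := by
  have h0 : 0 < p := Nat.Prime.pos Fact.out
  rw [sum_congr rfl fun j _ => hx j ⟨0, h0⟩, sum_const, card_univ, Fintype.card_fin,
    ← Nat.cast_smul_eq_nsmul (ZMod p), ZMod.natCast_self, zero_smul]

end ZModModule

section Fp

variable {p n : ℕ} {x : Fin p → Fin n → ZMod p}

lemma Fp_eq_one_of_sum_eq_zero (hp : 2 ≤ p) (h : ∑ j, x j = 0) : Fp p n x = 1 := by
  refine prod_eq_one fun i _ => ?_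
  rw [← Finset.sum_apply, h, Pi.zero_apply, zero_pow (by omega), sub_zero]

lemma Fp_eq_zero_of_sum_ne_zero [Fact p.Prime] (h : ∑ j, x j ≠ 0) : Fp p n x = 0 := by
  obtain ⟨i, hi⟩ := Function.ne_iff.mp h
  rw [Finset.sum_apply] at hi
  exact prod_eq_zero (mem_univ i) (by rw [ZMod.pow_card_sub_one_eq_one hi, sub_self])

end Fp

section Rp

variable {p n : ℕ} {x : Fin p → Fin n → ZMod p}

lemma Rp_eq_sum_filter :
    Rp p n x = ∑ σ : Perm (Fin p) with 3 ≤ orbitCount σ ∧ ∀ i, x (σ i) = x i,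
      (sign σ : ZMod p) := by
  rw [Rp, ← filter_filter, sum_filter (p := fun σ : Perm (Fin p) => ∀ i, x (σ i) = x i),
    Int.cast_sum]
  refine sum_congr rfl fun σ _ => ?_
  split_ifs <;> simp

lemma Rp_eq_one_of_injective (hp3 : 3 ≤ p) (hx : Function.Injective x) : Rp p n x = 1 := by
  have hstab : univ.filter (fun σ : Perm (Fin p) =>
      3 ≤ orbitCount σ ∧ ∀ i, x (σ i) = x i) = {1} := by
    ext σ
    simp only [mem_filter, mem_univ, true_and, mem_singleton]
    constructor
    · exact fun ⟨_, hσ⟩ => Perm.ext fun i => hx (hσ i)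
    · rintro rfl
      exact ⟨orbitCount_one.symm ▸ hp3, fun _ => rfl⟩
  rw [Rp_eq_sum_filter, hstab, sum_singleton, Perm.sign_one, Units.val_one, Int.cast_one]

lemma Rp_eq_one_of_forall_eq (hp : p.Prime) (hp3 : 3 ≤ p) (hx : ∀ i j, x i = x j) :
    Rp p n x = 1 := by
  rw [Rp_eq_sum_filter, ← sum_sign_filter_three_le_orbitCount hp hp3]
  exact sum_congr (filter_congr fun σ _ => and_iff_left fun i => hx _ _) fun _ _ => rfl

lemma Rp_eq_zero_of_three_le_card_image (hx : ¬Function.Injective x) (h3 : 3 ≤ #(univ.image x)) :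
    Rp p n x = 0 := by
  obtain ⟨a, b, hxab, hab⟩ := Function.not_injective_iff.mp hx
  have hstab :
      univ.filter (fun σ : Perm (Fin p) => 3 ≤ orbitCount σ ∧ ∀ i, x (σ i) = x i) =
        univ.filter fun σ => ∀ i, x (σ i) = x i :=
    filter_congr fun σ _ => and_iff_right_of_imp fun hσ => h3.trans (card_image_le_orbitCount hσ)
  have hswap : ∀ i, x (swap a b i) = x i := fun i => by
    rcases eq_or_ne i a with rfl | hia
    · rw [swap_apply_left, hxab]
    rcases eq_or_ne i b with rfl | hib
    · rw [swap_apply_right, hxab]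
    · rw [swap_apply_of_ne_of_ne hia hib]
  have hzero := sum_sign_eq_zero_of_mul_swap_mem (s := univ.filter fun σ => ∀ i, x (σ i) = x i)
    hab fun σ hσ => by
      simp only [mem_filter, mem_univ, true_and, mul_apply] at hσ ⊢
      exact fun i => (hσ _).trans (hswap i)
  rw [Rp_eq_sum_filter, hstab]
  exact_mod_cast congrArg (Int.cast : ℤ → ZMod p) hzero

end Rp

theorem stmt_11_general (p n : ℕ) (hp : p.Prime) (hodd : Odd p)
    (x : Fin p → (Fin n → ZMod p)) :
    (Function.Injective x ∧ ∑ j, x j = 0 → Ip p n x = 1) ∧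
    ((∀ i j, x i = x j) → Ip p n x = 1) ∧
    (¬(Function.Injective x ∧ ∑ j, x j = 0) → ¬(∀ i j, x i = x j) →
      Ip p n x = 0) := by
  have := Fact.mk hp
  have hp3 : 3 ≤ p := by
    obtain ⟨k, rfl⟩ := hodd
    have := hp.two_le
    omega
  refine ⟨fun ⟨hinj, hsum⟩ => ?_, fun hconst => ?_, fun hbad hnconst => ?_⟩
  · rw [Ip, Rp_eq_one_of_injective hp3 hinj, Fp_eq_one_of_sum_eq_zero (by omega) hsum, mul_one]
  · rw [Ip, Rp_eq_one_of_forall_eq hp hp3 hconst,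
      Fp_eq_one_of_sum_eq_zero (by omega) (sum_eq_zero_of_forall_eq hconst), mul_one]
  · by_cases hsum : ∑ j, x j = 0
    · rw [Ip, Rp_eq_zero_of_three_le_card_image (fun hinj => hbad ⟨hinj, hsum⟩)
        (three_le_card_image_of_sum_eq_zero hsum hnconst), zero_mul]
    · rw [Ip, Fp_eq_zero_of_sum_ne_zero hsum, mul_zero]

theorem stmt_11 (p n : ℕ) (hp : p.Prime) (hodd : Odd p) (hn : 1 ≤ n)
    (x : Fin p → (Fin n → ZMod p)) :
    (Function.Injective x ∧ ∑ j, x j = 0 → Ip p n x = 1) ∧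
    ((∀ i j, x i = x j) → Ip p n x = 1) ∧
    (¬(Function.Injective x ∧ ∑ j, x j = 0) → ¬(∀ i j, x i = x j) →
      Ip p n x = 0) :=
  stmt_11_general p n hp hodd x
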